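/- arXiv:1108.4408 — 6 statements merged into one kernel-verified Lean document; each statement's English description precedes it below -/
import Mathlib

section
/- For any sequence of positive integers X = ⟨n₁,...,n_r⟩ summing to n, the entropy satisfies (r−1)·log₂(n) ≤ n·H(X). -/
/-!
Writing `y = n / nᵢ`, concavity of `log` between `1` and `n` gives `(y - 1) log n ≤ (n - 1) log y`,
which rearranges to `(n - nᵢ) log n ≤ n · nᵢ log (n / nᵢ)`. Summing over `i` turns the left side
into `(r - 1) n log n`.
-/

open Real Finset

lemma sub_one_mul_log_le_sub_one_mul_log {y N : ℝ} (hy : 1 ≤ y) (hyN : y ≤ N) :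
    (y - 1) * log N ≤ (N - 1) * log y := by
  rcases hy.eq_or_lt with rfl | hy
  · simp
  rcases hyN.eq_or_lt with rfl | hyN
  · rw [mul_comm]
  have h := strictConcaveOn_log_Ioi.concaveOn.neg.secant_mono_aux1
    (Set.mem_Ioi.2 one_pos) (Set.mem_Ioi.2 (by linarith)) hy hyN
  simp only [Pi.neg_apply, log_one, neg_zero, mul_zero, zero_add] at h
  linarith

lemma sub_mul_log_le_mul_mul_log_div {x N : ℝ} (hx : 1 ≤ x) (hxN : x ≤ N) :
    (N - x) * log N ≤ N * (x * log (N / x)) := by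
  have hx0 : 0 < x := by linarith
  have hN0 : 0 ≤ N := by linarith
  have hy : 1 ≤ N / x := (one_le_div hx0).2 hxN
  have hchord := sub_one_mul_log_le_sub_one_mul_log hy (div_le_self hN0 hx)
  have hlog : 0 ≤ log (N / x) := log_nonneg hy
  calc (N - x) * log N = x * ((N / x - 1) * log N) := by field_simp
    _ ≤ x * ((N - 1) * log (N / x)) := by gcongr
    _ ≤ N * (x * log (N / x)) := by nlinarith

lemma card_sub_one_mul_log_le_sum_mul_log_div {ι : Type*} (s : Finset ι) (x : ι → ℝ)
    (hx : ∀ i ∈ s, 1 ≤ x i) :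
    ((#s : ℝ) - 1) * log (∑ i ∈ s, x i) ≤ ∑ i ∈ s, x i * log ((∑ i ∈ s, x i) / x i) := by
  set N := ∑ i ∈ s, x i
  rcases s.eq_empty_or_nonempty with rfl | ⟨i₀, hi₀⟩
  · simp [N]
  have hx0 : ∀ i ∈ s, 0 ≤ x i := fun i hi => zero_le_one.trans (hx i hi)
  have hxN : ∀ i ∈ s, x i ≤ N := fun i hi => single_le_sum hx0 hi
  have hN : 0 < N := zero_lt_one.trans_le ((hx i₀ hi₀).trans (hxN i₀ hi₀))
  refine le_of_mul_le_mul_left ?_ hN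
  calc N * ((#s - 1) * log N) = ∑ i ∈ s, (N - x i) * log N := by
        rw [← sum_mul, sum_sub_distrib, sum_const, nsmul_eq_mul]; ring
    _ ≤ ∑ i ∈ s, N * (x i * log (N / x i)) :=
        sum_le_sum fun i hi => sub_mul_log_le_mul_mul_log_div (hx i hi) (hxN i hi)
    _ = N * ∑ i ∈ s, x i * log (N / x i) := (mul_sum ..).symm

theorem log_lower_bound_entropy_general (r n : ℕ) (ns : Fin r → ℕ)
    (hpos : ∀ i, 0 < ns i) (hsum : ∑ i, ns i = n) :
    ((r : ℝ) - 1) * Real.logb 2 n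
      ≤ (n : ℝ) * (∑ i, ((ns i : ℝ) / n) * Real.logb 2 ((n : ℝ) / ns i)) := by
  rcases n.eq_zero_or_pos with rfl | hn
  · simp
  have hcast : ∑ i, (ns i : ℝ) = n := by exact_mod_cast hsum
  have key := card_sub_one_mul_log_le_sum_mul_log_div univ (fun i => (ns i : ℝ))
    fun i _ => Nat.one_le_cast.2 (hpos i)
  rw [hcast, card_univ, Fintype.card_fin] at key
  calc ((r : ℝ) - 1) * logb 2 n = ((r - 1) * log n) / log 2 := by rw [logb, mul_div_assoc]
    _ ≤ (∑ i, ns i * log (n / ns i)) / log 2 := by gcongr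
    _ = n * ∑ i, (ns i / n) * logb 2 (n / ns i) := by
        rw [mul_sum, sum_div]
        refine sum_congr rfl fun i _ => ?_
        rw [logb]
        field_simp

/-- For positive integers `n₁,…,n_r` summing to `n`, the entropy satisfies
`(r−1)·log₂ n ≤ n·H(X)`. -/
theorem log_lower_bound_entropy (r n : ℕ) (hr : 1 ≤ r) (ns : Fin r → ℕ)
    (hpos : ∀ i, 0 < ns i) (hsum : ∑ i, ns i = n) :
    ((r : ℝ) - 1) * Real.logb 2 n
      ≤ (n : ℝ) * (∑ i, ((ns i : ℝ) / n) * Real.logb 2 ((n : ℝ) / ns i)) :=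
  log_lower_bound_entropy_general r n ns hpos hsum
end

section
/- The entropy of the most skewed distribution ⟨1,1,...,1,n−r+1⟩ (with r−1 ones) equals ((r−1)/n)·log₂(n) + ((n−r+1)/n)·log₂(n/(n−r+1)), and this value is a lower bound on H(X) for every sequence X of r positive integers summing to n. -/
open Real Finset

lemma key_real (a b : ℝ) (ha : 1 ≤ a) (hb : 1 ≤ b) :
    a * Real.log a + b * Real.log b ≤ (a + b - 1) * Real.log (a + b - 1) := by
  rcases eq_or_lt_of_le (by linarith : (2:ℝ) ≤ a + b) with h2 | h2
  · have ha1 : a = 1 := by linarith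
    have hb1 : b = 1 := by linarith
    subst ha1; subst hb1; norm_num
  · have htpos : (0:ℝ) < a + b - 2 := by linarith
    have htne : a + b - 2 ≠ 0 := ne_of_gt htpos
    have hl1 : (0:ℝ) ≤ (b-1)/(a+b-2) := by apply div_nonneg <;> linarith
    have hl2 : (0:ℝ) ≤ (a-1)/(a+b-2) := by apply div_nonneg <;> linarith
    have hsum : (b-1)/(a+b-2) + (a-1)/(a+b-2) = 1 := by field_simp; ring
    have hconv := Real.convexOn_mul_log
    have hmem1 : (1:ℝ) ∈ Set.Ici (0:ℝ) := by norm_num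
    have hmemc : a + b - 1 ∈ Set.Ici (0:ℝ) := by simp; linarith
    have h1 := hconv.2 hmem1 hmemc hl1 hl2 hsum
    have h2' := hconv.2 hmem1 hmemc hl2 hl1 (by linarith [hsum])
    simp only [smul_eq_mul, mul_one, Real.log_one, mul_zero, zero_add] at h1 h2'
    have e1 : (b-1)/(a+b-2) + (a-1)/(a+b-2) * (a+b-1) = a := by field_simp; ring
    have e2 : (a-1)/(a+b-2) + (b-1)/(a+b-2) * (a+b-1) = b := by field_simp; ring
    rw [e1] at h1; rw [e2] at h2'
    calc a * Real.log a + b * Real.log b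
        ≤ (a-1)/(a+b-2) * ((a+b-1) * Real.log (a+b-1))
          + (b-1)/(a+b-2) * ((a+b-1) * Real.log (a+b-1)) := by linarith
      _ = (a+b-1) * Real.log (a+b-1) := by
          rw [← add_mul, show (a-1)/(a+b-2) + (b-1)/(a+b-2) = 1 by linarith [hsum], one_mul]

lemma key_nat (a b : ℕ) (ha : 1 ≤ a) (hb : 1 ≤ b) :
    (a:ℝ) * Real.log a + (b:ℝ) * Real.log b
      ≤ ((a + b - 1 : ℕ):ℝ) * Real.log ((a + b - 1 : ℕ):ℝ) := by
  have hc : ((a + b - 1 : ℕ):ℝ) = (a:ℝ) + b - 1 := by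
    have h : 1 ≤ a + b := by omega
    push_cast [Nat.cast_sub h]
    ring
  rw [hc]
  exact key_real a b (by exact_mod_cast ha) (by exact_mod_cast hb)

lemma sum_mul_log_le {ι : Type*} {s : Finset ι} (a : ι → ℕ) (hne : s.Nonempty)
    (h1 : ∀ i ∈ s, 1 ≤ a i) :
    ∑ i ∈ s, (a i : ℝ) * Real.log (a i)
      ≤ (((∑ i ∈ s, a i) + 1 - s.card : ℕ):ℝ)
        * Real.log (((∑ i ∈ s, a i) + 1 - s.card : ℕ):ℝ) := by
  induction hne using Finset.Nonempty.cons_induction with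
  | singleton i => simp
  | cons i s his hs ih =>
    have h1s : ∀ j ∈ s, 1 ≤ a j := fun j hj => h1 j (Finset.mem_cons_of_mem hj)
    have hcard : s.card ≤ ∑ j ∈ s, a j := by
      calc s.card = s.card • 1 := by simp
        _ ≤ ∑ j ∈ s, a j := Finset.card_nsmul_le_sum s a 1 h1s
    have hi1 : 1 ≤ a i := h1 i (Finset.mem_cons_self i s)
    rw [Finset.sum_cons, Finset.sum_cons, Finset.card_cons]
    calc (a i : ℝ) * Real.log (a i) + ∑ j ∈ s, (a j : ℝ) * Real.log (a j)
        ≤ (a i : ℝ) * Real.log (a i)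
          + (((∑ j ∈ s, a j) + 1 - s.card : ℕ):ℝ)
            * Real.log (((∑ j ∈ s, a j) + 1 - s.card : ℕ):ℝ) := by
          linarith [ih h1s]
      _ ≤ ((a i + ((∑ j ∈ s, a j) + 1 - s.card) - 1 : ℕ):ℝ)
            * Real.log ((a i + ((∑ j ∈ s, a j) + 1 - s.card) - 1 : ℕ):ℝ) :=
          key_nat (a i) ((∑ j ∈ s, a j) + 1 - s.card) hi1 (by omega)
      _ = ((a i + ∑ j ∈ s, a j + 1 - (s.card + 1) : ℕ):ℝ)
            * Real.log ((a i + ∑ j ∈ s, a j + 1 - (s.card + 1) : ℕ):ℝ) := by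
          have h : a i + ((∑ j ∈ s, a j) + 1 - s.card) - 1
              = a i + (∑ j ∈ s, a j) + 1 - (s.card + 1) := by omega
          rw [h]

/-- The entropy of the most skewed distribution `⟨1,…,1,n−r+1⟩` (with `r−1` ones)
equals `((r−1)/n)·log₂ n + ((n−r+1)/n)·log₂(n/(n−r+1))`, and this value is a lower
bound on the entropy of every sequence of `r` positive integers summing to `n`. -/
theorem entropy_min_skewed (r n : ℕ) (hr : 1 ≤ r) (hrn : r ≤ n) :
    (∑ i : Fin r, (((if (i : ℕ) < r - 1 then 1 else n - r + 1 : ℕ) : ℝ) / n)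
        * Real.logb 2 ((n : ℝ) / ((if (i : ℕ) < r - 1 then 1 else n - r + 1 : ℕ) : ℝ)))
      = ((r : ℝ) - 1) / n * Real.logb 2 n
        + ((n : ℝ) - r + 1) / n * Real.logb 2 ((n : ℝ) / ((n : ℝ) - r + 1))
    ∧ ∀ ns : Fin r → ℕ, (∀ i, 0 < ns i) → (∑ i, ns i = n) →
        ((r : ℝ) - 1) / n * Real.logb 2 n
          + ((n : ℝ) - r + 1) / n * Real.logb 2 ((n : ℝ) / ((n : ℝ) - r + 1))
        ≤ ∑ i, ((ns i : ℝ) / n) * Real.logb 2 ((n : ℝ) / ns i) := by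
  have hn : 1 ≤ n := le_trans hr hrn
  have hn0 : (0:ℝ) < n := by exact_mod_cast hn
  have hcast : ((n - r + 1 : ℕ):ℝ) = (n : ℝ) - r + 1 := by
    push_cast [Nat.cast_sub hrn]; ring
  have hm1 : (1:ℝ) ≤ (n : ℝ) - r + 1 := by
    have : (r:ℝ) ≤ n := by exact_mod_cast hrn
    linarith
  have hm0 : (0:ℝ) < (n : ℝ) - r + 1 := by linarith
  have hlog2 : (0:ℝ) < Real.log 2 := Real.log_pos (by norm_num)
  constructor
  · rw [Fin.sum_univ_eq_sum_range
      (fun k => ((if k < r - 1 then 1 else n - r + 1 : ℕ) : ℝ) / n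
        * Real.logb 2 ((n : ℝ) / ((if k < r - 1 then 1 else n - r + 1 : ℕ) : ℝ)))]
    have e : ∑ k ∈ Finset.range r,
        ((if k < r - 1 then 1 else n - r + 1 : ℕ) : ℝ) / n
          * Real.logb 2 ((n : ℝ) / ((if k < r - 1 then 1 else n - r + 1 : ℕ) : ℝ))
        = ∑ k ∈ Finset.range (r-1),
            ((if k < r - 1 then 1 else n - r + 1 : ℕ) : ℝ) / n
              * Real.logb 2 ((n : ℝ) / ((if k < r - 1 then 1 else n - r + 1 : ℕ) : ℝ))
          + ((if r - 1 < r - 1 then 1 else n - r + 1 : ℕ) : ℝ) / n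
              * Real.logb 2 ((n : ℝ) / ((if r - 1 < r - 1 then 1 else n - r + 1 : ℕ) : ℝ)) := by
      rw [← Finset.sum_range_succ, show r - 1 + 1 = r by omega]
    rw [e]
    have e2 : ∀ k ∈ Finset.range (r-1),
        ((if k < r - 1 then 1 else n - r + 1 : ℕ) : ℝ) / n
          * Real.logb 2 ((n : ℝ) / ((if k < r - 1 then 1 else n - r + 1 : ℕ) : ℝ))
        = (1:ℝ) / n * Real.logb 2 ((n:ℝ) / (1:ℝ)) := fun k hk => by
      rw [if_pos (Finset.mem_range.mp hk)]; norm_num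
    rw [Finset.sum_congr rfl e2, if_neg (lt_irrefl _), hcast]
    rw [Finset.sum_const, Finset.card_range, nsmul_eq_mul]
    have hr1 : ((r - 1 : ℕ):ℝ) = (r:ℝ) - 1 := by push_cast [Nat.cast_sub hr]; ring
    rw [hr1, div_one]
    ring
  · intro ns hpos hsum
    have hsumR : ∑ i, (ns i : ℝ) = n := by exact_mod_cast congrArg Nat.cast hsum
    have hb := sum_mul_log_le (s := (Finset.univ : Finset (Fin r))) ns
      ⟨⟨0, hr⟩, Finset.mem_univ _⟩ (fun i _ => hpos i)
    rw [hsum, Finset.card_univ, Fintype.card_fin] at hb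
    have hnr : ((n + 1 - r : ℕ):ℝ) = (n:ℝ) - r + 1 := by
      push_cast [Nat.cast_sub (by omega : r ≤ n + 1)]; ring
    rw [hnr] at hb
    have hterm : ∀ i, ((ns i : ℝ) / n) * Real.logb 2 ((n : ℝ) / ns i)
        = (ns i : ℝ) * Real.logb 2 n / n - (ns i : ℝ) * Real.log (ns i) / (n * Real.log 2) := by
      intro i
      have hnsi : (0:ℝ) < ns i := by exact_mod_cast hpos i
      rw [Real.logb_div (ne_of_gt hn0) (ne_of_gt hnsi), Real.logb, Real.logb]
      field_simp
    rw [Finset.sum_congr rfl (fun i _ => hterm i), Finset.sum_sub_distrib,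
      ← Finset.sum_div, ← Finset.sum_div, ← Finset.sum_mul, hsumR]
    have key : (∑ i, (ns i : ℝ) * Real.log (ns i)) / (↑n * Real.log 2)
        ≤ (((n:ℝ) - r + 1) * Real.log ((n:ℝ) - r + 1)) / (↑n * Real.log 2) := by
      gcongr
    have hL : ((r : ℝ) - 1) / n * Real.logb 2 n
          + ((n : ℝ) - r + 1) / n * Real.logb 2 ((n : ℝ) / ((n : ℝ) - r + 1))
        = (n:ℝ) * Real.logb 2 n / n
          - (((n:ℝ) - r + 1) * Real.log ((n:ℝ) - r + 1)) / (n * Real.log 2) := by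
      rw [Real.logb_div (ne_of_gt hn0) (ne_of_gt hm0), Real.logb, Real.logb]
      field_simp
      ring
    rw [hL]
    linarith [key]
end

section
/- For positive integers n₁,...,n_r summing to n, it holds that r·log₂(r) ≤ n·H(⟨n₁,...,n_r⟩) + log₂(n), where H is the entropy of the length distribution. -/
/-! Since every `nᵢ ≥ 1` and `n / nᵢ ≥ 1`, we have `n · H = ∑ᵢ nᵢ log (n / nᵢ) ≥ ∑ᵢ log (n / nᵢ)`,
and the latter is at least `r log r` by Gibbs' inequality against the uniform distribution on the
`r` parts. The summand `log n` is nonnegative slack. -/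

open Finset Real

section

variable {ι : Type*} [Fintype ι]

lemma le_sum_of_pos {x : ι → ℝ} (hx : ∀ i, 0 < x i) (i : ι) : x i ≤ ∑ j, x j :=
  single_le_sum (fun j _ => (hx j).le) (mem_univ i)

/-- Termwise `log (r xᵢ / S) ≤ r xᵢ / S - 1`, and the right-hand sides sum to `0`. -/
lemma card_mul_log_card_le_sum_log_sum_div {x : ι → ℝ} (hx : ∀ i, 0 < x i) :
    (Fintype.card ι : ℝ) * log (Fintype.card ι) ≤ ∑ i, log ((∑ j, x j) / x i) := by
  cases isEmpty_or_nonempty ι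
  · simp
  set S := ∑ j, x j
  set r := (Fintype.card ι : ℝ)
  have hr : 0 < r := by simp [r, Fintype.card_pos]
  have hS : 0 < S := (hx (Classical.arbitrary ι)).trans_le (le_sum_of_pos hx _)
  have hterm : ∀ i, log r - log (S / x i) ≤ r * x i / S - 1 := fun i => by
    rw [← log_div hr.ne' (div_pos hS (hx i)).ne', div_div_eq_mul_div]
    exact log_le_sub_one_of_pos (by have := hx i; positivity)
  have hsum : ∑ i, (r * x i / S - 1) = 0 := by
    rw [sum_sub_distrib, ← sum_div, ← mul_sum, mul_div_cancel_right₀ _ hS.ne']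
    simp [r]
  calc r * log r = ∑ _i : ι, log r := by simp [r]
    _ ≤ ∑ i, log (S / x i) := by
      have := sum_le_sum fun i (_ : i ∈ univ) => hterm i
      rw [hsum, sum_sub_distrib] at this
      linarith

lemma card_mul_logb_card_le_sum_logb_sum_div {b : ℝ} (hb : 1 < b) {x : ι → ℝ}
    (hx : ∀ i, 0 < x i) :
    (Fintype.card ι : ℝ) * logb b (Fintype.card ι) ≤ ∑ i, logb b ((∑ j, x j) / x i) := by
  simp only [logb, ← sum_div, ← mul_div_assoc]
  exact div_le_div_of_nonneg_right (card_mul_log_card_le_sum_log_sum_div hx) (log_pos hb).le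

lemma card_mul_logb_card_le_sum_mul_entropy {b : ℝ} (hb : 1 < b) {x : ι → ℝ}
    (hx : ∀ i, 1 ≤ x i) :
    (Fintype.card ι : ℝ) * logb b (Fintype.card ι)
      ≤ (∑ j, x j) * ∑ i, (x i / ∑ j, x j) * logb b ((∑ j, x j) / x i) := by
  have hpos : ∀ i, 0 < x i := fun i => one_pos.trans_le (hx i)
  set S := ∑ j, x j
  calc _ ≤ ∑ i, logb b (S / x i) := card_mul_logb_card_le_sum_logb_sum_div hb hpos
    _ ≤ ∑ i, x i * logb b (S / x i) := by
      refine sum_le_sum fun i _ => le_mul_of_one_le_left ?_ (hx i)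
      exact logb_nonneg hb ((one_le_div (hpos i)).2 (le_sum_of_pos hpos i))
    _ = S * ∑ i, (x i / S) * logb b (S / x i) := by
      rw [mul_sum]
      refine sum_congr rfl fun i _ => ?_
      have hS : S ≠ 0 := ((hpos i).trans_le (le_sum_of_pos hpos i)).ne'
      rw [← mul_assoc, mul_div_cancel₀ _ hS]

end

theorem r_log_r_le_general (r n : ℕ) (ns : Fin r → ℕ)
    (hpos : ∀ i, 0 < ns i) (hsum : ∑ i, ns i = n) :
    (r : ℝ) * Real.logb 2 r
      ≤ (n : ℝ) * (∑ i, ((ns i : ℝ) / n) * Real.logb 2 ((n : ℝ) / ns i))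
        + Real.logb 2 n := by
  have hn : (n : ℝ) = ∑ i, (ns i : ℝ) := by exact_mod_cast hsum.symm
  have hentropy := card_mul_logb_card_le_sum_mul_entropy one_lt_two
    (x := fun i => (ns i : ℝ)) fun i => by exact_mod_cast hpos i
  rw [Fintype.card_fin, ← hn] at hentropy
  exact le_add_of_le_of_nonneg hentropy
    (div_nonneg (Real.log_natCast_nonneg n) (Real.log_nonneg one_le_two))

/-- For positive integers `n₁,…,n_r` summing to `n`:
`r·log₂ r ≤ n·H(⟨n₁,…,n_r⟩) + log₂ n`. -/
theorem r_log_r_le (r n : ℕ) (hr : 1 ≤ r) (ns : Fin r → ℕ)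
    (hpos : ∀ i, 0 < ns i) (hsum : ∑ i, ns i = n) :
    (r : ℝ) * Real.logb 2 r
      ≤ (n : ℝ) * (∑ i, ((ns i : ℝ) / n) * Real.logb 2 ((n : ℝ) / ns i))
        + Real.logb 2 n :=
  r_log_r_le_general r n ns hpos hsum
end

section
/- The binary logarithm of the multinomial coefficient is bounded below: log₂(n!/(n₁!·⋯·n_r!)) ≥ n·H(⟨n₁,...,n_r⟩) − r·log₂(n) for all positive integers n₁,...,n_r summing to n. -/
open Finset

/-- Key per-coordinate inequality: `m^k · m! ≤ m^m · k!` for `m ≥ 1`. -/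
lemma aux_pow_mul_factorial_le (m k : ℕ) (hm : 0 < m) :
    m ^ k * m.factorial ≤ m ^ m * k.factorial := by
  rcases le_total k m with h | h
  · have hd : k.factorial * m.descFactorial (m - k) = m.factorial := by
      have := Nat.factorial_mul_descFactorial (Nat.sub_le m k)
      rwa [Nat.sub_sub_self h] at this
    calc m ^ k * m.factorial = m ^ k * m.descFactorial (m - k) * k.factorial := by
          rw [mul_assoc, mul_comm (m.descFactorial _), hd]
      _ ≤ m ^ k * m ^ (m - k) * k.factorial := by
          gcongr
          exact Nat.descFactorial_le_pow m _
      _ = m ^ m * k.factorial := by rw [← pow_add, Nat.add_sub_cancel' h]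
  · have hd : m.factorial * k.descFactorial (k - m) = k.factorial := by
      have := Nat.factorial_mul_descFactorial (Nat.sub_le k m)
      rwa [Nat.sub_sub_self h] at this
    have hdge : m ^ (k - m) ≤ k.descFactorial (k - m) := by
      calc m ^ (k - m) ≤ (m + 1) ^ (k - m) := Nat.pow_le_pow_left (Nat.le_succ m) _
        _ = (k + 1 - (k - m)) ^ (k - m) := by congr 1; omega
        _ ≤ k.descFactorial (k - m) := Nat.pow_sub_le_descFactorial k _
    calc m ^ k * m.factorial = m ^ m * (m ^ (k - m) * m.factorial) := by
          rw [← mul_assoc, ← pow_add, Nat.add_sub_cancel' h]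
      _ ≤ m ^ m * (k.descFactorial (k - m) * m.factorial) := by gcongr
      _ = m ^ m * k.factorial := by rw [mul_comm (k.descFactorial _), hd]

/-- The term at `k = ns` is the largest term of the multinomial expansion of `n^n`. -/
lemma aux_maxterm {r n : ℕ} (ns k : Fin r → ℕ) (hpos : ∀ i, 0 < ns i)
    (hsum : ∑ i, ns i = n) (hk : ∑ i, k i = n) :
    Nat.multinomial univ k * ∏ i, ns i ^ k i
      ≤ Nat.multinomial univ ns * ∏ i, ns i ^ ns i := by
  set A := ∏ i, (k i).factorial with hA
  set B := ∏ i, (ns i).factorial with hB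
  have hApos : 0 < A := Finset.prod_pos fun i _ => Nat.factorial_pos _
  have hBpos : 0 < B := Finset.prod_pos fun i _ => Nat.factorial_pos _
  have hAspec : A * Nat.multinomial univ k = n.factorial := by
    rw [hA, Nat.multinomial_spec, hk]
  have hBspec : B * Nat.multinomial univ ns = n.factorial := by
    rw [hB, Nat.multinomial_spec, hsum]
  have hcore : (∏ i, ns i ^ k i) * B ≤ (∏ i, ns i ^ ns i) * A := by
    rw [hA, hB, ← Finset.prod_mul_distrib, ← Finset.prod_mul_distrib]
    exact Finset.prod_le_prod' fun i _ => aux_pow_mul_factorial_le (ns i) (k i) (hpos i)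
  have : Nat.multinomial univ k * (∏ i, ns i ^ k i) * (A * B)
      ≤ Nat.multinomial univ ns * (∏ i, ns i ^ ns i) * (A * B) := by
    calc Nat.multinomial univ k * (∏ i, ns i ^ k i) * (A * B)
        = n.factorial * ((∏ i, ns i ^ k i) * B) := by
          rw [← hAspec]; ring
      _ ≤ n.factorial * ((∏ i, ns i ^ ns i) * A) := by gcongr
      _ = Nat.multinomial univ ns * (∏ i, ns i ^ ns i) * (A * B) := by
          rw [← hBspec]; ring
  exact Nat.le_of_mul_le_mul_right this (Nat.mul_pos hApos hBpos)

/-- Crude bound on the number of compositions. -/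
lemma aux_card_piAntidiag_le (s n : ℕ) :
    (Finset.piAntidiag (univ : Finset (Fin (s + 1))) n).card ≤ (n + 1) ^ s := by
  have hcard : ((univ : Finset (Fin s → Fin (n + 1)))).card = (n + 1) ^ s := by
    simp [Fintype.card_fun]
  rw [← hcard]
  apply Finset.card_le_card_of_injOn
    (fun k (j : Fin s) => (⟨min (k j.castSucc) n, by omega⟩ : Fin (n + 1)))
    (fun _ _ => mem_univ _)
  intro k₁ hk₁ k₂ hk₂ heq
  simp only [Finset.mem_coe, Finset.mem_piAntidiag] at hk₁ hk₂
  have hle : ∀ (k : Fin (s+1) → ℕ), (∑ i, k i = n) → ∀ j, k j ≤ n := by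
    intro k hks j
    rw [← hks]
    exact Finset.single_le_sum (fun i _ => Nat.zero_le _) (mem_univ _)
  have h1 := hle k₁ hk₁.1
  have h2 := hle k₂ hk₂.1
  have hcs : ∀ j : Fin s, k₁ j.castSucc = k₂ j.castSucc := by
    intro j
    have := congrFun heq j
    simp only [Fin.mk.injEq] at this
    rwa [min_eq_left (h1 _), min_eq_left (h2 _)] at this
  funext i
  induction i using Fin.lastCases with
  | last =>
    have e1 := hk₁.1
    have e2 := hk₂.1
    rw [Fin.sum_univ_castSucc] at e1 e2
    have : ∑ j : Fin s, k₁ j.castSucc = ∑ j : Fin s, k₂ j.castSucc :=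
      Finset.sum_congr rfl (fun j _ => hcs j)
    omega
  | cast j => exact hcs j

/-- `(n+1)^s ≤ n^(s+1)` for `s + 1 ≤ n`, over the reals. -/
lemma aux_succ_pow_le (s n : ℕ) (h : s + 1 ≤ n) : ((n : ℝ) + 1) ^ s ≤ (n : ℝ) ^ (s + 1) := by
  have hn0 : (0:ℝ) < n := by
    have : 0 < n := by omega
    exact_mod_cast this
  rcases le_or_gt 3 n with hn | hn
  · have key : (1 + 1 / (n:ℝ)) ^ s ≤ (n : ℝ) := by
      have h2 : (1 + 1 / (n:ℝ)) ≤ Real.exp (1 / n) := by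
        have := Real.add_one_le_exp (1 / (n:ℝ))
        linarith
      calc (1 + 1 / (n:ℝ)) ^ s ≤ Real.exp (1 / n) ^ s := by
            gcongr
        _ = Real.exp (s / n) := by
            rw [← Real.exp_nat_mul]; congr 1; field_simp
        _ ≤ Real.exp 1 := by
            apply Real.exp_le_exp.mpr
            rw [div_le_one hn0]
            exact_mod_cast le_trans (by omega) h
        _ ≤ 3 := by linarith [Real.exp_one_lt_d9]
        _ ≤ (n : ℝ) := by exact_mod_cast hn
    calc ((n : ℝ) + 1) ^ s = (n : ℝ) ^ s * (1 + 1 / n) ^ s := by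
          rw [← mul_pow]; congr 1; field_simp
      _ ≤ (n : ℝ) ^ s * n := by
          apply mul_le_mul_of_nonneg_left key (by positivity)
      _ = (n : ℝ) ^ (s + 1) := by rw [pow_succ]
  · have hn1 : 1 ≤ n := by omega
    interval_cases n
    · have hs : s = 0 := by omega
      subst hs; norm_num
    · rcases (by omega : s = 0 ∨ s = 1) with hs | hs <;> subst hs <;> norm_num

/-- `log₂(n!/(n₁!·…·n_r!)) ≥ n·H(⟨n₁,…,n_r⟩) − r·log₂ n`. -/
theorem log_multinomial_ge (r n : ℕ) (ns : Fin r → ℕ)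
    (hpos : ∀ i, 0 < ns i) (hsum : ∑ i, ns i = n) :
    (n : ℝ) * (∑ i, ((ns i : ℝ) / n) * Real.logb 2 ((n : ℝ) / ns i))
        - (r : ℝ) * Real.logb 2 n
      ≤ Real.logb 2 (Nat.multinomial Finset.univ ns) := by
  rcases Nat.eq_zero_or_pos r with hr | hr
  · subst hr
    have hn : n = 0 := by simpa using hsum.symm
    subst hn
    simp
  obtain ⟨s, rfl⟩ : ∃ s, r = s + 1 := ⟨r - 1, by omega⟩
  have hrn : s + 1 ≤ n := by
    calc s + 1 = ∑ _i : Fin (s+1), 1 := by simp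
      _ ≤ ∑ i, ns i := Finset.sum_le_sum fun i _ => hpos i
      _ = n := hsum
  have hn0 : 0 < n := by omega
  -- the key natural-number inequality
  have hnat : n ^ n ≤ (Finset.piAntidiag (univ : Finset (Fin (s+1))) n).card *
      (Nat.multinomial univ ns * ∏ i, ns i ^ ns i) := by
    have hexp : n ^ n = ∑ k ∈ Finset.piAntidiag (univ : Finset (Fin (s+1))) n,
        Nat.multinomial univ k * ∏ i, ns i ^ k i := by
      have := Finset.sum_pow_eq_sum_piAntidiag (univ : Finset (Fin (s+1))) ns n
      simpa [hsum] using this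
    rw [hexp]
    apply Finset.sum_le_card_nsmul
    intro k hk
    rw [Finset.mem_piAntidiag] at hk
    exact aux_maxterm ns k hpos hsum hk.1
  -- move to the reals
  set M : ℕ := Nat.multinomial univ ns with hM
  have hMpos : 0 < M := Nat.multinomial_pos _ _
  have hreal : (n : ℝ) ^ n ≤ (n : ℝ) ^ (s + 1) * ((M : ℝ) * ∏ i, (ns i : ℝ) ^ ns i) := by
    calc (n : ℝ) ^ n ≤ ((Finset.piAntidiag (univ : Finset (Fin (s+1))) n).card : ℝ) *
          ((M : ℝ) * ∏ i, (ns i : ℝ) ^ ns i) := by exact_mod_cast hnat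
      _ ≤ ((n : ℝ) + 1) ^ s * ((M : ℝ) * ∏ i, (ns i : ℝ) ^ ns i) := by
          apply mul_le_mul_of_nonneg_right _ (by positivity)
          exact_mod_cast aux_card_piAntidiag_le s n
      _ ≤ (n : ℝ) ^ (s + 1) * ((M : ℝ) * ∏ i, (ns i : ℝ) ^ ns i) := by
          apply mul_le_mul_of_nonneg_right (aux_succ_pow_le s n hrn) (by positivity)
  -- take logs
  have hlog : (n : ℝ) * Real.logb 2 n ≤ (s + 1 : ℝ) * Real.logb 2 n
      + (Real.logb 2 M + ∑ i, (ns i : ℝ) * Real.logb 2 (ns i)) := by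
    have hnR : (0:ℝ) < n := by exact_mod_cast hn0
    have hMR : (0:ℝ) < M := by exact_mod_cast hMpos
    have hPR : (0:ℝ) < ∏ i, (ns i : ℝ) ^ ns i := by
      apply Finset.prod_pos
      intro i _
      have : (0:ℝ) < ns i := by exact_mod_cast hpos i
      positivity
    have hlhs : Real.logb 2 ((n : ℝ) ^ n) ≤
        Real.logb 2 ((n : ℝ) ^ (s + 1) * ((M : ℝ) * ∏ i, (ns i : ℝ) ^ ns i)) := by
      apply (Real.logb_le_logb (by norm_num) (by positivity) (by positivity)).mpr hreal
    rw [Real.logb_pow] at hlhs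
    have hprod : Real.logb 2 (∏ i, (ns i : ℝ) ^ ns i) = ∑ i, (ns i : ℝ) * Real.logb 2 (ns i) := by
      rw [Real.logb, Real.log_prod]
      · rw [Finset.sum_div]
        apply Finset.sum_congr rfl
        intro i _
        rw [Real.log_pow, Real.logb]
        ring
      · intro i _
        have := hpos i
        positivity
    rw [Real.logb_mul (by positivity) (ne_of_gt (by positivity)),
        Real.logb_mul (ne_of_gt hMR) (ne_of_gt hPR),
        Real.logb_pow, hprod] at hlhs
    push_cast at hlhs ⊢
    linarith
  -- rewrite the entropy sum
  have hent : (n : ℝ) * (∑ i, ((ns i : ℝ) / n) * Real.logb 2 ((n : ℝ) / ns i))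
      = (n : ℝ) * Real.logb 2 n - ∑ i, (ns i : ℝ) * Real.logb 2 (ns i) := by
    rw [Finset.mul_sum]
    have : ∀ i : Fin (s+1), (n : ℝ) * (((ns i : ℝ) / n) * Real.logb 2 ((n : ℝ) / ns i))
        = (ns i : ℝ) * Real.logb 2 n - (ns i : ℝ) * Real.logb 2 (ns i) := by
      intro i
      have hni : (0:ℝ) < ns i := by exact_mod_cast hpos i
      have hnn : (0:ℝ) < n := by exact_mod_cast hn0
      rw [Real.logb_div (by positivity) (by positivity)]
      field_simp
    rw [Finset.sum_congr rfl (fun i _ => this i), Finset.sum_sub_distrib, ← Finset.sum_mul]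
    have : ∑ i, (ns i : ℝ) = (n : ℝ) := by exact_mod_cast hsum
    rw [this]
  rw [hent]
  push_cast
  linarith
end

section
/- In an optimal (Huffman) binary prefix tree for positive weights, if a leaf/node v is at depth d and w is an ancestor of v at depth d−2 (the grandparent), then the total weight covered by w is at least twice the weight covered by v; consequently every node at depth ℓ covers a weight at most n/2^{⌊ℓ/2⌋}, where n is the total weight. -/
/-- Binary trees with real weights at the leaves. -/
inductive BTree : Type
  | leaf (w : ℝ) : BTree
  | node (l r : BTree) : BTree

namespace BTree

/-- Total weight of the leaves of a tree. -/
noncomputable def weight : BTree → ℝ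
  | leaf w => w
  | node l r => l.weight + r.weight

/-- `Σ (leaf weight × leaf depth)`. -/
noncomputable def cost : BTree → ℝ
  | leaf _ => 0
  | node l r => l.cost + r.cost + l.weight + r.weight

/-- The multiset of leaf weights. -/
noncomputable def leaves : BTree → Multiset ℝ
  | leaf w => {w}
  | node l r => l.leaves + r.leaves

/-- `SubtreeAt T d s` means `s` is (the subtree rooted at) a node of `T` at depth `d`. -/
def SubtreeAt : BTree → ℕ → BTree → Prop
  | t, 0, s => s = t
  | leaf _, _ + 1, _ => False
  | node l r, d + 1, s => l.SubtreeAt d s ∨ r.SubtreeAt d s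

end BTree

namespace BTree

lemma weight_eq_sum (t : BTree) : t.weight = t.leaves.sum := by
  induction t with
  | leaf w => simp [weight, leaves]
  | node l r ihl ihr => simp [weight, leaves, ihl, ihr]

lemma leaves_le_of_subtreeAt : ∀ (T : BTree) (d : ℕ) (s : BTree),
    T.SubtreeAt d s → s.leaves ≤ T.leaves := by
  intro T
  induction T with
  | leaf w =>
    intro d s hs
    match d, hs with
    | 0, hs => subst hs; exact le_refl _
  | node l r ihl ihr =>
    intro d s hs
    match d, hs with
    | 0, hs => subst hs; exact le_refl _
    | d + 1, hs =>
      rcases hs with hs | hs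
      · exact le_trans (ihl d s hs) (by simp [leaves])
      · exact le_trans (ihr d s hs) (by simp [leaves])

lemma weight_pos (t : BTree) (h : ∀ x ∈ t.leaves, (0 : ℝ) < x) : 0 < t.weight := by
  induction t with
  | leaf w => exact h w (by simp [leaves])
  | node l r ihl ihr =>
    have hl := ihl (fun x hx => h x (by simp [leaves]; exact Or.inl hx))
    have hr := ihr (fun x hx => h x (by simp [leaves]; exact Or.inr hx))
    simpa [weight] using add_pos hl hr

/-- Replacement lemma: replacing the subtree `s` at depth `d` by `s'` yields a
tree `T'` with controlled leaves, cost and weight. -/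
lemma replace : ∀ (T : BTree) (d : ℕ) (s : BTree), T.SubtreeAt d s → ∀ s' : BTree,
    ∃ T' : BTree,
      T'.leaves + s.leaves = T.leaves + s'.leaves ∧
      T'.cost + s.cost + d * s.weight = T.cost + s'.cost + d * s'.weight ∧
      T'.weight + s.weight = T.weight + s'.weight := by
  intro T
  induction T with
  | leaf w =>
    intro d s hs s'
    match d, hs with
    | 0, hs =>
      subst hs
      exact ⟨s', add_comm _ _, by push_cast; ring, add_comm _ _⟩
  | node l r ihl ihr =>
    intro d s hs s'
    match d, hs with
    | 0, hs =>
      subst hs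
      exact ⟨s', add_comm _ _, by push_cast; ring, add_comm _ _⟩
    | d + 1, hs =>
      rcases hs with hs | hs
      · obtain ⟨l', hL, hC, hW⟩ := ihl d s hs s'
        refine ⟨node l' r, ?_, ?_, ?_⟩
        · simp only [leaves]
          rw [add_right_comm, hL, add_right_comm]
        · simp only [cost, weight]
          push_cast
          nlinarith [hC, hW]
        · simp only [weight]
          linarith [hW]
      · obtain ⟨r', hL, hC, hW⟩ := ihr d s hs s'
        refine ⟨node l r', ?_, ?_, ?_⟩
        · simp only [leaves]
          rw [add_assoc, hL, add_assoc]
        · simp only [cost, weight]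
          push_cast
          nlinarith [hC, hW]
        · simp only [weight]
          linarith [hW]

lemma subtreeAt_trans : ∀ (T : BTree) (d : ℕ) (w : BTree), T.SubtreeAt d w →
    ∀ (k : ℕ) (s : BTree), w.SubtreeAt k s → T.SubtreeAt (d + k) s := by
  intro T
  induction T with
  | leaf x =>
    intro d w hw k s hs
    match d, hw with
    | 0, hw => subst hw; simpa using hs
  | node l r ihl ihr =>
    intro d w hw k s hs
    match d, hw with
    | 0, hw => subst hw; simpa using hs
    | d + 1, hw =>
      have he : d + 1 + k = (d + k) + 1 := by omega
      rw [he]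
      rcases hw with hw | hw
      · exact Or.inl (ihl d w hw k s hs)
      · exact Or.inr (ihr d w hw k s hs)

lemma subtreeAt_zero (T : BTree) : T.SubtreeAt 0 T := by
  cases T <;> rfl

lemma subtreeAt_split : ∀ (a : ℕ) (T : BTree) (b : ℕ) (s : BTree),
    T.SubtreeAt (a + b) s → ∃ m : BTree, T.SubtreeAt a m ∧ m.SubtreeAt b s := by
  intro a
  induction a with
  | zero =>
    intro T b s hs
    exact ⟨T, subtreeAt_zero T, by simpa using hs⟩
  | succ a ih =>
    intro T b s hs
    have he : a + 1 + b = (a + b) + 1 := by omega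
    rw [he] at hs
    cases T with
    | leaf x => simp [BTree.SubtreeAt] at hs
    | node l r =>
      rcases hs with hs | hs
      · obtain ⟨m, h1, h2⟩ := ih l b s hs
        exact ⟨m, Or.inl h1, h2⟩
      · obtain ⟨m, h1, h2⟩ := ih r b s hs
        exact ⟨m, Or.inr h1, h2⟩

end BTree

/-- In an optimal (Huffman) binary prefix tree with positive leaf weights, the
grandparent of any node covers at least twice the weight of that node;
consequently every node at depth `ℓ` covers weight at most `n / 2^⌊ℓ/2⌋`,
where `n` is the total weight. -/
theorem huffman_grandparent_double (T : BTree)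
    (hpos : ∀ w ∈ T.leaves, (0 : ℝ) < w)
    (hopt : ∀ T' : BTree, T'.leaves = T.leaves → T.cost ≤ T'.cost) :
    (∀ (d : ℕ) (w v : BTree), T.SubtreeAt d w → w.SubtreeAt 2 v →
        2 * v.weight ≤ w.weight) ∧
    (∀ (ℓ : ℕ) (s : BTree), T.SubtreeAt ℓ s →
        s.weight ≤ T.weight / 2 ^ (ℓ / 2)) := by
  -- local optimality: any rearrangement of a subtree cannot lower its cost
  have key : ∀ (d : ℕ) (w : BTree), T.SubtreeAt d w →
      ∀ w' : BTree, w'.leaves = w.leaves → w.cost ≤ w'.cost := by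
    intro d w hw w' hl
    obtain ⟨T', hL, hC, hW⟩ := BTree.replace T d w hw w'
    have hwt : w'.weight = w.weight := by
      rw [BTree.weight_eq_sum, BTree.weight_eq_sum, hl]
    rw [hl] at hL
    have hTl : T'.leaves = T.leaves := add_right_cancel hL
    have hTc := hopt T' hTl
    rw [hwt] at hC
    linarith
  have wpos : ∀ (d : ℕ) (s : BTree), T.SubtreeAt d s → 0 < s.weight := by
    intro d s hs
    exact BTree.weight_pos s fun x hx =>
      hpos x (Multiset.mem_of_le (BTree.leaves_le_of_subtreeAt T d s hs) hx)
  have part1 : ∀ (d : ℕ) (w v : BTree), T.SubtreeAt d w → w.SubtreeAt 2 v →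
      2 * v.weight ≤ w.weight := by
    intro d w v hw hv
    cases w with
    | leaf x => simp [BTree.SubtreeAt] at hv
    | node l r =>
      simp only [BTree.SubtreeAt] at hv
      rcases hv with hv | hv
      · cases l with
        | leaf x => simp [BTree.SubtreeAt] at hv
        | node a b =>
          simp only [BTree.SubtreeAt] at hv
          rcases hv with hv | hv <;> subst hv
          · -- v = a, uncle r, sibling b
            have hc := key d _ hw (BTree.node (BTree.node r b) v)
              (by simp only [BTree.leaves]; abel)
            have hb : 0 < b.weight := wpos (d + 2) b
              (BTree.subtreeAt_trans T d _ hw 2 b (by simp [BTree.SubtreeAt]))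
            simp only [BTree.cost, BTree.weight] at hc ⊢
            linarith
          · -- v = b, uncle r, sibling a
            have hc := key d _ hw (BTree.node (BTree.node a r) v)
              (by simp only [BTree.leaves]; abel)
            have ha : 0 < a.weight := wpos (d + 2) a
              (BTree.subtreeAt_trans T d _ hw 2 a (by simp [BTree.SubtreeAt]))
            simp only [BTree.cost, BTree.weight] at hc ⊢
            linarith
      · cases r with
        | leaf x => simp [BTree.SubtreeAt] at hv
        | node a b =>
          simp only [BTree.SubtreeAt] at hv
          rcases hv with hv | hv <;> subst hv
          · -- v = a, uncle l, sibling b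
            have hc := key d _ hw (BTree.node v (BTree.node l b))
              (by simp only [BTree.leaves]; abel)
            have hb : 0 < b.weight := wpos (d + 2) b
              (BTree.subtreeAt_trans T d _ hw 2 b (by simp [BTree.SubtreeAt]))
            simp only [BTree.cost, BTree.weight] at hc ⊢
            linarith
          · -- v = b, uncle l, sibling a
            have hc := key d _ hw (BTree.node v (BTree.node a l))
              (by simp only [BTree.leaves]; abel)
            have ha : 0 < a.weight := wpos (d + 2) a
              (BTree.subtreeAt_trans T d _ hw 2 a (by simp [BTree.SubtreeAt]))
            simp only [BTree.cost, BTree.weight] at hc ⊢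
            linarith
  refine ⟨part1, ?_⟩
  have wle : ∀ (d : ℕ) (s : BTree), T.SubtreeAt d s → s.weight ≤ T.weight := by
    intro d s hs
    have hle := BTree.leaves_le_of_subtreeAt T d s hs
    obtain ⟨u, hu⟩ := Multiset.le_iff_exists_add.mp hle
    have hu0 : (0 : ℝ) ≤ u.sum := Multiset.sum_nonneg fun x hx =>
      le_of_lt (hpos x (by rw [hu]; exact Multiset.mem_add.mpr (Or.inr hx)))
    rw [BTree.weight_eq_sum, BTree.weight_eq_sum, hu, Multiset.sum_add]
    linarith
  intro ℓ
  induction ℓ using Nat.strong_induction_on with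
  | _ ℓ ih =>
    match ℓ with
    | 0 => intro s hs; simpa using wle 0 s hs
    | 1 => intro s hs; simpa using wle 1 s hs
    | m + 2 =>
      intro s hs
      obtain ⟨w, hw, hws⟩ := BTree.subtreeAt_split m T 2 s hs
      have h1 := part1 m w s hw hws
      have h2 := ih m (by omega) w hw
      have he : (m + 2) / 2 = m / 2 + 1 := by omega
      rw [he, pow_succ]
      have h3 : T.weight / (2 ^ (m / 2) * 2) = T.weight / 2 ^ (m / 2) / 2 := by
        rw [div_div]
      rw [h3]
      linarith
end

section
/- In a t-ary optimal code tree (t ≥ 2) minimizing weighted leaf depth over positive leaf weights summing to n, any node at depth ℓ covers weight at most n/t^{⌊ℓ/2⌋}. -/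
/-- Trees with real weights at the leaves, where each internal node has a finite
list of children (given as a function from `Fin k`). -/
inductive TTree : Type
  | leaf (w : ℝ) : TTree
  | node (k : ℕ) (children : Fin k → TTree) : TTree

namespace TTree

/-- Total weight of the leaves below a node. -/
noncomputable def weight : TTree → ℝ
  | leaf w => w
  | node _ c => ∑ i, (c i).weight

/-- `Σ (leaf weight × leaf depth)`. -/
noncomputable def cost : TTree → ℝ
  | leaf _ => 0
  | node _ c => ∑ i, ((c i).cost + (c i).weight)

/-- The multiset of leaf weights. -/
noncomputable def leaves : TTree → Multiset ℝ
  | leaf w => {w}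
  | node _ c => ∑ i, (c i).leaves

/-- Every internal node has at most `t` children. -/
def AritLE (t : ℕ) : TTree → Prop
  | leaf _ => True
  | node k c => k ≤ t ∧ ∀ i, (c i).AritLE t

/-- `SubtreeAt T d v` means `v` is (the subtree rooted at) a node of `T` at depth `d`. -/
def SubtreeAt : TTree → ℕ → TTree → Prop
  | s, 0, v => v = s
  | leaf _, _ + 1, _ => False
  | node _ c, d + 1, v => ∃ i, (c i).SubtreeAt d v

lemma subtreeAt_zero {T v : TTree} : T.SubtreeAt 0 v ↔ v = T := by
  cases T <;> rfl

lemma weight_eq_sum : ∀ T : TTree, T.weight = T.leaves.sum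
  | leaf w => by simp [weight, leaves]
  | node k c => by
      simp only [weight, leaves]
      rw [Multiset.sum_sum]
      exact Finset.sum_congr rfl fun i _ => weight_eq_sum (c i)

lemma weight_eq_of_leaves_eq {a b : TTree} (h : a.leaves = b.leaves) : a.weight = b.weight := by
  rw [weight_eq_sum, weight_eq_sum, h]

lemma leaves_subtree : ∀ (T : TTree) {d : ℕ} {v : TTree}, T.SubtreeAt d v → v.leaves ≤ T.leaves := by
  intro T
  induction T with
  | leaf w =>
    intro d v h
    match d, h with
    | 0, h => rw [h]
  | node k c ih =>
    intro d v h
    match d, h with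
    | 0, h => rw [h]
    | d+1, ⟨i, hi⟩ =>
      calc v.leaves ≤ (c i).leaves := ih i hi
        _ ≤ (node k c).leaves := by
            simp only [leaves]
            exact Finset.single_le_sum (f := fun p => (c p).leaves)
              (fun _ _ => Multiset.zero_le _) (Finset.mem_univ i)

lemma aritLE_subtree {t : ℕ} : ∀ (T : TTree), T.AritLE t → ∀ {d : ℕ} {v : TTree},
    T.SubtreeAt d v → v.AritLE t := by
  intro T
  induction T with
  | leaf w =>
    intro hT d v h
    match d, h with
    | 0, h => rw [h]; trivial
  | node k c ih =>
    intro hT d v h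
    match d, h with
    | 0, h => rw [h]; exact hT
    | d+1, ⟨i, hi⟩ => exact ih i (hT.2 i) hi

lemma weight_nonneg {x : TTree} (h : ∀ w ∈ x.leaves, (0:ℝ) ≤ w) : 0 ≤ x.weight := by
  rw [weight_eq_sum]
  exact Multiset.sum_nonneg h

lemma subtreeAt_decomp (a b : ℕ) : ∀ (T v : TTree), T.SubtreeAt (a + b) v →
    ∃ g, T.SubtreeAt a g ∧ g.SubtreeAt b v := by
  induction a with
  | zero =>
    intro T v h
    rw [Nat.zero_add] at h
    exact ⟨T, subtreeAt_zero.mpr rfl, h⟩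
  | succ a ih =>
    intro T v h
    rw [show a + 1 + b = (a + b) + 1 from by omega] at h
    match T, h with
    | node k c, ⟨i, hi⟩ =>
      obtain ⟨g, h1, h2⟩ := ih (c i) v hi
      exact ⟨g, ⟨i, h1⟩, h2⟩

lemma sum_ite_split {M : Type*} [AddCommMonoid M] {k : ℕ} {s : Finset (Fin k)} (i : Fin k)
    (hi : i ∈ s) (c : Fin k → M) (x : M) :
    ∑ p ∈ s, (if p = i then x else c p) = x + ∑ p ∈ s.erase i, c p := by
  rw [← Finset.add_sum_erase s (fun p => if p = i then x else c p) hi]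
  simp only [if_pos rfl]
  congr 1
  exact Finset.sum_congr rfl fun p hp => if_neg (Finset.ne_of_mem_erase hp)


lemma cost_node (k : ℕ) (c : Fin k → TTree) :
    (node k c).cost = ∑ i, ((c i).cost + (c i).weight) := rfl

lemma leaves_node (k : ℕ) (c : Fin k → TTree) :
    (node k c).leaves = ∑ i, (c i).leaves := rfl

lemma weight_node (k : ℕ) (c : Fin k → TTree) :
    (node k c).weight = ∑ i, (c i).weight := rfl

lemma exists_replace {t : ℕ} : ∀ (T : TTree), T.AritLE t → ∀ {d : ℕ} {g : TTree},
    T.SubtreeAt d g → ∀ g' : TTree, g'.AritLE t → g'.leaves = g.leaves →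
    ∃ T' : TTree, T'.AritLE t ∧ T'.leaves = T.leaves ∧ T'.cost + g.cost = T.cost + g'.cost := by
  intro T
  induction T with
  | leaf w =>
    intro hT d g hg g' ha hl
    match d, hg with
    | 0, hg => exact ⟨g', ha, by rw [hl, hg], by rw [hg]; ring⟩
  | node k c ih =>
    intro hT d g hg g' ha hl
    match d, hg with
    | 0, hg => exact ⟨g', ha, by rw [hl, hg], by rw [hg]; ring⟩
    | d+1, ⟨i, hi⟩ =>
      obtain ⟨T', h1, h2, h3⟩ := ih i (hT.2 i) hi g' ha hl
      have hww : T'.weight = (c i).weight := weight_eq_of_leaves_eq h2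
      refine ⟨node k (fun p => if p = i then T' else c p), ⟨hT.1, fun p => ?_⟩, ?_, ?_⟩
      · dsimp only
        rcases eq_or_ne p i with rfl | hpi
        · simpa using h1
        · simpa [hpi] using hT.2 p
      · rw [leaves_node, leaves_node]
        simp only [apply_ite leaves]
        rw [sum_ite_split i (Finset.mem_univ i), h2,
          Finset.add_sum_erase _ (fun p => (c p).leaves) (Finset.mem_univ i)]
      · rw [cost_node, cost_node (k := k) (c := c)]
        simp only [apply_ite cost, apply_ite weight, ite_add_ite]
        rw [sum_ite_split i (Finset.mem_univ i),
          ← Finset.add_sum_erase _ (fun p => (c p).cost + (c p).weight) (Finset.mem_univ i)]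
        rw [hww]
        linarith

lemma local_opt {t : ℕ} {T : TTree} (hT : T.AritLE t)
    (hopt : ∀ T' : TTree, T'.AritLE t → T'.leaves = T.leaves → T.cost ≤ T'.cost)
    {d : ℕ} {g : TTree} (hg : T.SubtreeAt d g) :
    ∀ g' : TTree, g'.AritLE t → g'.leaves = g.leaves → g.cost ≤ g'.cost := by
  intro g' ha hl
  obtain ⟨T', h1, h2, h3⟩ := exists_replace T hT hg g' ha hl
  have := hopt T' h1 h2
  linarith


lemma sum_f_ite {M : Type*} [AddCommMonoid M] (f : TTree → M) {k : ℕ} (j : Fin k)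
    (c : Fin k → TTree) (x : TTree) :
    ∑ q : Fin k, f (if q = j then x else c q) = f x + ∑ q ∈ Finset.univ.erase j, f (c q) := by
  simp only [apply_ite f]
  exact sum_ite_split j (Finset.mem_univ j) _ _

lemma cost_snoc (k : ℕ) (c : Fin k → TTree) (x : TTree) :
    (node (k+1) (Fin.snoc c x)).cost = (node k c).cost + (x.cost + x.weight) := by
  simp only [cost_node, Fin.sum_univ_castSucc, Fin.snoc_castSucc, Fin.snoc_last]

lemma leaves_snoc (k : ℕ) (c : Fin k → TTree) (x : TTree) :
    (node (k+1) (Fin.snoc c x)).leaves = (node k c).leaves + x.leaves := by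
  simp only [leaves_node, Fin.sum_univ_castSucc, Fin.snoc_castSucc, Fin.snoc_last]

lemma cost_U (k : ℕ) (c : Fin k → TTree) (i : Fin k) (x : TTree) :
    (node k (fun p => if p = i then x else c p)).cost + ((c i).cost + (c i).weight)
      = (node k c).cost + (x.cost + x.weight) := by
  simp only [cost_node]
  have h1 : ∑ p : Fin k, ((if p = i then x else c p).cost + (if p = i then x else c p).weight)
      = (x.cost + x.weight) + ∑ p ∈ Finset.univ.erase i, ((c p).cost + (c p).weight) :=
    sum_f_ite (fun s => s.cost + s.weight) i c x
  rw [h1, ← Finset.add_sum_erase _ (fun p => (c p).cost + (c p).weight) (Finset.mem_univ i)]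
  ring

lemma weight_U (k : ℕ) (c : Fin k → TTree) (i : Fin k) (x : TTree) :
    (node k (fun p => if p = i then x else c p)).weight + (c i).weight
      = (node k c).weight + x.weight := by
  simp only [weight_node]
  have h1 : ∑ p : Fin k, (if p = i then x else c p).weight
      = x.weight + ∑ p ∈ Finset.univ.erase i, (c p).weight := sum_f_ite weight i c x
  rw [h1, ← Finset.add_sum_erase _ (fun p => (c p).weight) (Finset.mem_univ i)]
  ring

lemma leaves_U (k : ℕ) (c : Fin k → TTree) (i : Fin k) (x : TTree) :
    (node k (fun p => if p = i then x else c p)).leaves + (c i).leaves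
      = (node k c).leaves + x.leaves := by
  simp only [leaves_node]
  have h1 : ∑ p : Fin k, (if p = i then x else c p).leaves
      = x.leaves + ∑ p ∈ Finset.univ.erase i, (c p).leaves := sum_f_ite leaves i c x
  rw [h1, ← Finset.add_sum_erase _ (fun p => (c p).leaves) (Finset.mem_univ i)]
  abel


lemma local_bound {t : ℕ} (ht : 2 ≤ t) (k : ℕ) (c : Fin k → TTree)
    (harg : (node k c).AritLE t)
    (hnn : ∀ w ∈ (node k c).leaves, (0:ℝ) ≤ w)
    (hloc : ∀ g' : TTree, g'.AritLE t → g'.leaves = (node k c).leaves →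
      (node k c).cost ≤ g'.cost)
    (v : TTree) (hv : (node k c).SubtreeAt 2 v) :
    (t : ℝ) * v.weight ≤ (node k c).weight := by
  obtain ⟨i, hi⟩ := hv
  obtain ⟨k', c', hci, j, rfl⟩ :
      ∃ (k' : ℕ) (c' : Fin k' → TTree), c i = node k' c' ∧ ∃ j, v = c' j := by
    cases hci : c i with
    | leaf w => rw [hci] at hi; exact hi.elim
    | node k' c' =>
      rw [hci] at hi
      obtain ⟨j, hj⟩ := hi
      exact ⟨k', c', rfl, j, subtreeAt_zero.mp hj⟩
  have hci' : (node k' c').AritLE t := hci ▸ harg.2 i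
  have hwn : ∀ x : TTree, x.leaves ≤ (node k c).leaves → 0 ≤ x.weight := fun x hx =>
    weight_nonneg (fun w hw => hnn w (Multiset.mem_of_le hx hw))
  have hvsub : (node k c).SubtreeAt 2 (c' j) :=
    ⟨i, by rw [hci]; exact ⟨j, subtreeAt_zero.mpr rfl⟩⟩
  have hCp : ∀ p : Fin k, 0 ≤ (c p).weight := by
    intro p
    have hs : (node k c).SubtreeAt 1 (c p) := ⟨p, subtreeAt_zero.mpr rfl⟩
    exact hwn _ (leaves_subtree _ hs)
  have hvw : 0 ≤ (c' j).weight := hwn _ (leaves_subtree _ hvsub)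
  have hvar : (c' j).AritLE t := aritLE_subtree _ harg hvsub
  have hciC : (c i).cost = (node k' c').cost := by rw [hci]
  have hciW : (c i).weight = (node k' c').weight := by rw [hci]
  have hciL : (c i).leaves = (node k' c').leaves := by rw [hci]
  -- key inequality: inner weight ≤ v.weight + rest, i.e. (c i).weight ≥ (c' j).weight
  have hiw : (c' j).weight ≤ (c i).weight := by
    have := weight_U k' c' j (c' j)
    -- trivial route: weight (node k' c') = sum ≥ (c' j).weight
    rw [hciW, weight_node, ← Finset.add_sum_erase _ (fun q => (c' q).weight) (Finset.mem_univ j)]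
    have : 0 ≤ ∑ q ∈ Finset.univ.erase j, (c' q).weight := by
      refine Finset.sum_nonneg fun q _ => ?_
      have hs : (node k c).SubtreeAt 2 (c' q) :=
        ⟨i, by rw [hci]; exact ⟨q, subtreeAt_zero.mpr rfl⟩⟩
      exact hwn _ (leaves_subtree _ hs)
    linarith
  rcases lt_or_eq_of_le harg.1 with hk | hk
  · -- k < t : contraction shows (c' j).weight ≤ 0
    have hv0 : (c' j).weight ≤ 0 := by
      set E : TTree := node 0 Fin.elim0 with hE
      have hEc : E.cost = 0 := by simp [hE, cost_node]
      have hEw : E.weight = 0 := by simp [hE, weight_node]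
      have hEl : E.leaves = 0 := by simp [hE, leaves_node]
      have hEa : E.AritLE t := ⟨by omega, fun z => z.elim0⟩
      set N : TTree := node k' (fun q => if q = j then E else c' q) with hN
      set g' : TTree := node (k+1) (Fin.snoc (fun p => if p = i then N else c p) (c' j)) with hg'
      have hNC : N.cost + ((c' j).cost + (c' j).weight) = (node k' c').cost + (E.cost + E.weight) :=
        cost_U k' c' j E
      have hNW : N.weight + (c' j).weight = (node k' c').weight + E.weight := weight_U k' c' j E
      have hNL : N.leaves + (c' j).leaves = (node k' c').leaves + E.leaves := leaves_U k' c' j E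
      have hUC : (node k (fun p => if p = i then N else c p)).cost + ((c i).cost + (c i).weight)
          = (node k c).cost + (N.cost + N.weight) := cost_U k c i N
      have hUL : (node k (fun p => if p = i then N else c p)).leaves + (c i).leaves
          = (node k c).leaves + N.leaves := leaves_U k c i N
      have hari : g'.AritLE t := by
        refine ⟨by omega, fun p => ?_⟩
        refine Fin.lastCases ?_ (fun q => ?_) p
        · rw [Fin.snoc_last]; exact hvar
        · rw [Fin.snoc_castSucc]
          show (if q = i then N else c q).AritLE t
          rcases eq_or_ne q i with rfl | hqi
          · rw [if_pos rfl, hN]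
            refine ⟨hci'.1, fun r => ?_⟩
            show (if r = j then E else c' r).AritLE t
            rcases eq_or_ne r j with rfl | hrj
            · rw [if_pos rfl]; exact hEa
            · rw [if_neg hrj]; exact hci'.2 r
          · rw [if_neg hqi]; exact harg.2 q
      have hL : g'.leaves = (node k c).leaves := by
        rw [hg', leaves_snoc]
        have key : ((node k (fun p => if p = i then N else c p)).leaves + (c' j).leaves)
            + ((node k' c').leaves) = (node k c).leaves + ((node k' c').leaves) := by
          calc ((node k (fun p => if p = i then N else c p)).leaves + (c' j).leaves)
              + (node k' c').leaves
              = ((node k (fun p => if p = i then N else c p)).leaves + (c i).leaves)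
                + (c' j).leaves := by rw [hciL]; abel
            _ = ((node k c).leaves + N.leaves) + (c' j).leaves := by rw [hUL]
            _ = (node k c).leaves + (N.leaves + (c' j).leaves) := by abel
            _ = (node k c).leaves + ((node k' c').leaves + E.leaves) := by rw [hNL]
            _ = (node k c).leaves + (node k' c').leaves := by rw [hEl]; abel
        exact add_right_cancel key
      have hC : g'.cost = (node k c).cost - (c' j).weight := by
        rw [hg', cost_snoc]
        rw [hciC, hciW] at hUC
        linarith
      have := hloc g' hari hL
      rw [hC] at this
      linarith
    have hw0 : (c' j).weight = 0 := le_antisymm hv0 hvw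
    rw [hw0, mul_zero]
    exact hwn _ le_rfl
  · -- k = t : exchange argument against each other child
    have hswap : ∀ m : Fin k, m ≠ i → (c' j).weight ≤ (c m).weight := by
      intro m hmi
      set N : TTree := node k' (fun q => if q = j then c m else c' q) with hN
      set c1 : Fin k → TTree := fun p => if p = i then N else c p with hc1
      set g' : TTree := node k (fun p => if p = m then c' j else c1 p) with hg'
      have hc1m : c1 m = c m := by rw [hc1]; exact if_neg hmi
      have hNC : N.cost + ((c' j).cost + (c' j).weight)
          = (node k' c').cost + ((c m).cost + (c m).weight) := cost_U k' c' j (c m)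
      have hNW : N.weight + (c' j).weight = (node k' c').weight + (c m).weight :=
        weight_U k' c' j (c m)
      have hNL : N.leaves + (c' j).leaves = (node k' c').leaves + (c m).leaves :=
        leaves_U k' c' j (c m)
      have hUC : (node k c1).cost + ((c i).cost + (c i).weight)
          = (node k c).cost + (N.cost + N.weight) := cost_U k c i N
      have hUL : (node k c1).leaves + (c i).leaves = (node k c).leaves + N.leaves :=
        leaves_U k c i N
      have hGC : g'.cost + ((c1 m).cost + (c1 m).weight)
          = (node k c1).cost + ((c' j).cost + (c' j).weight) := cost_U k c1 m (c' j)
      have hGL : g'.leaves + (c1 m).leaves = (node k c1).leaves + (c' j).leaves :=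
        leaves_U k c1 m (c' j)
      rw [hc1m] at hGC hGL
      have hari : g'.AritLE t := by
        refine ⟨harg.1, fun p => ?_⟩
        show (if p = m then c' j else c1 p).AritLE t
        rcases eq_or_ne p m with rfl | hpm
        · rw [if_pos rfl]; exact hvar
        · rw [if_neg hpm, hc1]
          show (if p = i then N else c p).AritLE t
          rcases eq_or_ne p i with rfl | hpi
          · rw [if_pos rfl, hN]
            refine ⟨hci'.1, fun r => ?_⟩
            show (if r = j then c m else c' r).AritLE t
            rcases eq_or_ne r j with rfl | hrj
            · rw [if_pos rfl]; exact harg.2 m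
            · rw [if_neg hrj]; exact hci'.2 r
          · rw [if_neg hpi]; exact harg.2 p
      have hL : g'.leaves = (node k c).leaves := by
        have key : g'.leaves + ((c m).leaves + (node k' c').leaves)
            = (node k c).leaves + ((c m).leaves + (node k' c').leaves) := by
          calc g'.leaves + ((c m).leaves + (node k' c').leaves)
              = (g'.leaves + (c m).leaves) + (node k' c').leaves := by abel
            _ = ((node k c1).leaves + (c' j).leaves) + (node k' c').leaves := by rw [hGL]
            _ = ((node k c1).leaves + (c i).leaves) + (c' j).leaves := by rw [hciL]; abel
            _ = ((node k c).leaves + N.leaves) + (c' j).leaves := by rw [hUL]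
            _ = (node k c).leaves + (N.leaves + (c' j).leaves) := by abel
            _ = (node k c).leaves + ((node k' c').leaves + (c m).leaves) := by rw [hNL]
            _ = (node k c).leaves + ((c m).leaves + (node k' c').leaves) := by abel
        exact add_right_cancel key
      have hC : g'.cost = (node k c).cost + (c m).weight - (c' j).weight := by
        rw [hciC, hciW] at hUC
        linarith
      have := hloc g' hari hL
      rw [hC] at this
      linarith
    -- sum up
    have hsum : (node k c).weight = (c i).weight + ∑ p ∈ Finset.univ.erase i, (c p).weight := by
      rw [weight_node, ← Finset.add_sum_erase _ (fun p => (c p).weight) (Finset.mem_univ i)]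
    have hbound : ∑ p ∈ Finset.univ.erase i, (c' j).weight
        ≤ ∑ p ∈ Finset.univ.erase i, (c p).weight :=
      Finset.sum_le_sum fun p hp => hswap p (Finset.ne_of_mem_erase hp)
    have hcard : (Finset.univ.erase i).card = k - 1 := by
      rw [Finset.card_erase_of_mem (Finset.mem_univ i), Finset.card_univ, Fintype.card_fin]
    have hconst : ∑ p ∈ Finset.univ.erase i, (c' j).weight = ((k-1 : ℕ) : ℝ) * (c' j).weight := by
      rw [Finset.sum_const, hcard, nsmul_eq_mul]
    have hk1 : ((k-1 : ℕ) : ℝ) = (k : ℝ) - 1 := by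
      have : 1 ≤ k := by omega
      push_cast [Nat.cast_sub this]
      ring
    have hkt : ((k : ℕ) : ℝ) = (t : ℝ) := by rw [hk]
    rw [hconst, hk1] at hbound
    rw [hsum]
    nlinarith [hbound, hiw, hvw]
end TTree

/-- In a `t`-ary optimal code tree (`t ≥ 2`) minimizing weighted leaf depth over
positive leaf weights summing to `n`, any node at depth `ℓ` covers weight at
most `n / t^⌊ℓ/2⌋`. -/
theorem tary_huffman_depth_weight (t : ℕ) (ht : 2 ≤ t) (T : TTree) (n : ℝ)
    (hpos : ∀ w ∈ T.leaves, (0 : ℝ) < w) (har : T.AritLE t)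
    (hopt : ∀ T' : TTree, T'.AritLE t → T'.leaves = T.leaves → T.cost ≤ T'.cost)
    (hw : T.weight = n) :
    ∀ (ℓ : ℕ) (v : TTree), T.SubtreeAt ℓ v → v.weight ≤ n / t ^ (ℓ / 2) := by
  have ht0 : (0:ℝ) < (t:ℝ) := by positivity
  intro ℓ
  induction ℓ using Nat.strong_induction_on with
  | _ ℓ ih =>
    intro v hv
    match ℓ, ih, hv with
    | 0, ih, hv =>
      have : v = T := TTree.subtreeAt_zero.mp hv
      subst this
      simpa using le_of_eq hw
    | 1, ih, hv =>
      obtain ⟨r, hr⟩ := Multiset.le_iff_exists_add.mp (TTree.leaves_subtree T hv)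
      have hsum : T.weight = v.weight + r.sum := by
        rw [TTree.weight_eq_sum, hr, Multiset.sum_add, TTree.weight_eq_sum]
      have hr0 : 0 ≤ r.sum := Multiset.sum_nonneg fun w hw2 =>
        (hpos w (by rw [hr]; exact Multiset.mem_add.mpr (Or.inr hw2))).le
      norm_num
      linarith
    | (ℓ+2), ih, hv =>
      obtain ⟨g, hg, hgv⟩ := TTree.subtreeAt_decomp ℓ 2 T v hv
      have hIH : g.weight ≤ n / t ^ (ℓ / 2) := ih ℓ (by omega) g hg
      have hnn : ∀ w ∈ g.leaves, (0:ℝ) ≤ w := fun w hw2 =>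
        (hpos w (Multiset.mem_of_le (TTree.leaves_subtree T hg) hw2)).le
      have hloc := TTree.local_opt har hopt hg
      have harg : g.AritLE t := TTree.aritLE_subtree T har hg
      have hkey : (t:ℝ) * v.weight ≤ g.weight := by
        match g, hgv, hnn, hloc, harg with
        | TTree.leaf w, hgv, _, _, _ => exact hgv.elim
        | TTree.node k c, hgv, hnn, hloc, harg =>
          exact TTree.local_bound ht k c harg hnn hloc v hgv
      have hdiv : (ℓ + 2) / 2 = ℓ / 2 + 1 := by omega
      rw [hdiv, pow_succ, ← div_div]
      rw [le_div_iff₀ ht0]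
      calc v.weight * t = t * v.weight := by ring
        _ ≤ g.weight := hkey
        _ ≤ n / t ^ (ℓ / 2) := hIH
end
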